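/- If N is a graded 2-absorbing coprimary R-submodule of a graded R-module M and a is a homogeneous element of R with a ∉ Ann_R(N), then aN is a graded 2-absorbing coprimary R-submodule of M. -/

import Mathlib

open DirectSum Pointwise

variable {G : Type} [AddGroup G] [DecidableEq G]
variable {R : Type} [CommRing R] (𝒜 : G → AddSubgroup R) [GradedRing 𝒜]
variable {M : Type} [AddCommGroup M] [Module R M] (ℳ : G → AddSubgroup M)
  [SetLike.GradedSMul 𝒜 ℳ] [DirectSum.Decomposition ℳ]

/-- A submodule is graded if it contains every homogeneous component of each of
its elements. -/
def IsGradedSubmodule (N : Submodule R M) : Prop :=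
  ∀ (g : G) (m : M), m ∈ N → (DirectSum.decompose ℳ m g : M) ∈ N

/-- The graded radical of an ideal: all `r` such that for each `g` some positive
power of the degree-`g` component of `r` lies in `P`. -/
def gradRad (P : Ideal R) : Set R :=
  {r : R | ∀ g : G, ∃ n : ℕ, 0 < n ∧ ((DirectSum.decompose 𝒜 r g : R)) ^ n ∈ P}

/-- Graded 2-absorbing coprimary submodule. -/
def IsGr2AbsCoprimary (N : Submodule R M) : Prop :=
  N ≠ ⊥ ∧ IsGradedSubmodule ℳ N ∧
  ∀ x y : R, (∃ g, x ∈ 𝒜 g) → (∃ g, y ∈ 𝒜 g) →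
    ∀ K : Submodule R M, IsGradedSubmodule ℳ K →
      (∀ m ∈ N, (x * y) • m ∈ K) →
      x ∈ gradRad 𝒜 (K.colon N) ∨ y ∈ gradRad 𝒜 (K.colon N) ∨ x * y ∈ N.annihilator

/-- Graded 2-absorbing primary ideal. -/
def IsGr2AbsPrimaryIdeal (P : Ideal R) : Prop :=
  P ≠ ⊤ ∧ (∀ (g : G) (r : R), r ∈ P → (DirectSum.decompose 𝒜 r g : R) ∈ P) ∧
  ∀ a b c : R, (∃ g, a ∈ 𝒜 g) → (∃ g, b ∈ 𝒜 g) → (∃ g, c ∈ 𝒜 g) →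
    a * b * c ∈ P → a * b ∈ P ∨ a * c ∈ gradRad 𝒜 P ∨ b * c ∈ gradRad 𝒜 P

/-! Put `K' := {m | a • m ∈ K}`, the preimage of `K` under multiplication by `a`. Then
`(K :_R aN) = (K' :_R N)`, and `K'` is graded whenever `K` is, because `a` is homogeneous and
so shifts homogeneous components. Feeding `K'` to the 2-absorbing coprimary property of `N`
therefore yields the alternatives for `aN`, the last one through `Ann_R(N) ⊆ Ann_R(aN)`. -/

section GradedModule

variable {ι A M σA σM : Type*} [AddLeftCancelMonoid ι] [DecidableEq ι]
  [AddCommMonoid M] [DistribSMul A M] [SetLike σA A] [SetLike σM M] [AddSubmonoidClass σM M]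
  {𝒜 : ι → σA} (ℳ : ι → σM) [SetLike.GradedSMul 𝒜 ℳ] [DirectSum.Decomposition ℳ]

theorem coe_decompose_smul_of_mem {a : A} {i : ι} (ha : a ∈ 𝒜 i) (j : ι) (m : M) :
    (decompose ℳ (a • m) (i + j) : M) = a • (decompose ℳ m j : M) := by
  induction m using DirectSum.Decomposition.inductionOn ℳ with
  | zero => simp
  | @homogeneous k x =>
    have hax : a • (x : M) ∈ ℳ (i + k) := SetLike.GradedSMul.smul_mem ha x.2
    by_cases hkj : k = j
    · subst hkj
      rw [decompose_of_mem_same ℳ hax, decompose_of_mem_same ℳ x.2]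
    · rw [decompose_of_mem_ne ℳ hax (mt add_left_cancel hkj), decompose_of_mem_ne ℳ x.2 hkj,
        smul_zero]
  | add m m' hm hm' =>
    rw [smul_add, decompose_add, decompose_add, DirectSum.add_apply, DirectSum.add_apply,
      AddMemClass.coe_add, AddMemClass.coe_add, hm, hm', smul_add]

end GradedModule

namespace Submodule

variable {R M : Type*} [CommSemiring R] [AddCommMonoid M] [Module R M]

theorem pointwise_smul_eq_bot_iff {N : Submodule R M} {a : R} :
    a • N = ⊥ ↔ a ∈ N.annihilator := by
  rw [eq_bot_iff, mem_annihilator]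
  refine ⟨fun h n hn => (mem_bot R).mp (h (smul_mem_pointwise_smul n a N hn)), ?_⟩
  rintro h _ ⟨n, hn, rfl⟩
  exact (mem_bot R).mpr (h n hn)

theorem colon_pointwise_smul (K N : Submodule R M) (a : R) :
    K.colon ↑(a • N) = (K.comap (LinearMap.lsmul R M a)).colon N := by
  ext r
  simp only [mem_colon, mem_comap, LinearMap.lsmul_apply]
  refine ⟨fun h n hn => smul_comm a r n ▸ h _ (smul_mem_pointwise_smul n a N hn), ?_⟩
  rintro h _ ⟨n, hn, rfl⟩
  exact smul_comm r a n ▸ h n hn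

end Submodule

section GradedSubmodule

variable {G R M σ : Type} [AddGroup G] [DecidableEq G] [CommRing R] [AddCommGroup M] [Module R M]
  [SetLike σ R] {𝒜 : G → σ} {ℳ : G → AddSubgroup M} [SetLike.GradedSMul 𝒜 ℳ]
  [DirectSum.Decomposition ℳ] {a : R} {i : G}

theorem IsGradedSubmodule.pointwise_smul {N : Submodule R M} (hN : IsGradedSubmodule ℳ N)
    (ha : a ∈ 𝒜 i) : IsGradedSubmodule ℳ (a • N) := by
  intro g m hm
  obtain ⟨n, hn, rfl⟩ := (Submodule.mem_smul_pointwise_iff_exists _ _ _).mp hm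
  have hdeg := coe_decompose_smul_of_mem ℳ ha (-i + g) n
  rw [add_neg_cancel_left] at hdeg
  rw [hdeg]
  exact Submodule.smul_mem_pointwise_smul _ _ _ (hN _ n hn)

theorem IsGradedSubmodule.comap_lsmul {K : Submodule R M} (hK : IsGradedSubmodule ℳ K)
    (ha : a ∈ 𝒜 i) : IsGradedSubmodule ℳ (K.comap (LinearMap.lsmul R M a)) := fun g m hm => by
  rw [Submodule.mem_comap, LinearMap.lsmul_apply, ← coe_decompose_smul_of_mem ℳ ha]
  exact hK (i + g) (a • m) hm

end GradedSubmodule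

theorem stmt_3 (N : Submodule R M) (hN : IsGr2AbsCoprimary 𝒜 ℳ N)
    (a : R) (ha : ∃ g, a ∈ 𝒜 g) (ha' : a ∉ N.annihilator) :
    IsGr2AbsCoprimary 𝒜 ℳ (a • N) := by
  obtain ⟨i, hai⟩ := ha
  obtain ⟨-, hgr, habs⟩ := hN
  refine ⟨mt Submodule.pointwise_smul_eq_bot_iff.mp ha', hgr.pointwise_smul hai,
    fun x y hx hy K hK hxyK => ?_⟩
  have hNK : ∀ m ∈ N, (x * y) • m ∈ K.comap (LinearMap.lsmul R M a) := fun m hm => by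
    simpa only [Submodule.mem_comap, LinearMap.lsmul_apply, smul_comm a]
      using hxyK _ (Submodule.smul_mem_pointwise_smul m a N hm)
  rw [Submodule.colon_pointwise_smul]
  rcases habs x y hx hy _ (hK.comap_lsmul hai) hNK with hxr | hyr | hxy
  exacts [.inl hxr, .inr (.inl hyr),
    .inr (.inr (Submodule.annihilator_mono (Submodule.smul_le_self_of_tower a N) hxy))]
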